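/- Let (X, δ) be a hyperconvex diversity with induced metric d(x,y) = δ({x,y}). If for every finite subset A = {x_1, …, x_n} of X one has (|A| − 1) · δ(A) ≤ Σ_{1 ≤ i < j ≤ n} d(x_i, x_j), then the induced metric space (X, d) is a hyperconvex metric space. -/

import Mathlib

/-- A diversity on `X`: a real-valued function on finite subsets of `X` which is
nonnegative, vanishes exactly on sets of cardinality at most one, and satisfies the
triangle inequality `δ(A ∪ C) ≤ δ(A ∪ B) + δ(B ∪ C)` for nonempty `B`. -/
structure Diversity (X : Type*) [DecidableEq X] where
  delta : Finset X → ℝ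
  nonneg : ∀ A, 0 ≤ delta A
  eq_zero_iff : ∀ A, delta A = 0 ↔ A.card ≤ 1
  triangle : ∀ A B C : Finset X, B.Nonempty →
    delta (A ∪ C) ≤ delta (A ∪ B) + delta (B ∪ C)

namespace Diversity

variable {X : Type*} [DecidableEq X]

/-- A diversity is hyperconvex if for every `r : ⟨X⟩ → ℝ` with `r ∅ = 0` such that
`δ(⋃_{A ∈ 𝒜} A) ≤ ∑_{A ∈ 𝒜} r A` for every finite collection `𝒜` of finite subsets
of `X`, there is `z ∈ X` with `δ({z} ∪ Y) ≤ r Y` for all finite `Y ⊆ X`. -/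
def Hyperconvex (D : Diversity X) : Prop :=
  ∀ r : Finset X → ℝ, r ∅ = 0 →
    (∀ 𝒜 : Finset (Finset X), D.delta (𝒜.sup id) ≤ ∑ A ∈ 𝒜, r A) →
    ∃ z : X, ∀ Y : Finset X, D.delta (insert z Y) ≤ r Y

/-- A diversity is bounded if its values are uniformly bounded above. -/
def Bounded (D : Diversity X) : Prop :=
  ∃ M : ℝ, 0 ≤ M ∧ ∀ A : Finset X, D.delta A ≤ M

end Diversity

namespace Diversity

variable {X : Type*} [DecidableEq X]

/-- The closed ball of center `x` and radius `r` of the metric space induced by a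
diversity (`d(x, y) = δ {x, y}`). -/
def ball (D : Diversity X) (x : X) (r : ℝ) : Set X :=
  {y : X | D.delta {x, y} ≤ r}

/-- Hyperconvexity of the metric space induced by a diversity: every family of closed
balls whose radii are nonnegative and satisfy `d(x_α, x_β) ≤ r_α + r_β` has nonempty
intersection. -/
def InducedHyperconvex (D : Diversity X) : Prop :=
  ∀ s : Set (X × ℝ), (∀ p ∈ s, 0 ≤ p.2) →
    (∀ p ∈ s, ∀ q ∈ s, D.delta {p.1, q.1} ≤ p.2 + q.2) →
    (⋂ p ∈ s, D.ball p.1 p.2).Nonempty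

end Diversity

/-!
Given a compatible family of closed balls `B̄(x_α, r_α)`, the function
`ρ x = inf_α (d(x, x_α) + r_α)` satisfies `d(a, b) ≤ ρ a + ρ b` for all `a, b` and
`ρ x_α ≤ r_α`. Summing `d(a, b) ≤ ρ a + ρ b` over the ordered pairs of distinct points of a
finite set `A` gives `∑ d ≤ 2 (|A| - 1) ∑_{a ∈ A} ρ a`, so the hypothesis on `δ` yields
`δ A ≤ ∑_{a ∈ A} ρ a`. Hence `Y ↦ ∑_{y ∈ Y} ρ y` is admissible for the hyperconvexity of the
diversity, and the point `z` it provides satisfies `d(z, x_α) ≤ ρ x_α ≤ r_α`.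
-/

theorem Finset.sum_sup_le_sum_sum {α M : Type*} [DecidableEq α] [AddCommMonoid M]
    [PartialOrder M] [IsOrderedAddMonoid M] {f : α → M} (hf : ∀ x, 0 ≤ f x)
    (𝒜 : Finset (Finset α)) : ∑ u ∈ 𝒜.sup id, f u ≤ ∑ A ∈ 𝒜, ∑ u ∈ A, f u := by
  induction 𝒜 using Finset.induction_on with
  | empty => simp
  | insert A 𝒜 hA ih =>
    rw [Finset.sup_insert, Finset.sum_insert hA, id, Finset.sup_eq_union]
    calc ∑ u ∈ A ∪ 𝒜.sup id, f u ≤ ∑ u ∈ A ∪ 𝒜.sup id, f u + ∑ u ∈ A ∩ 𝒜.sup id, f u :=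
          le_add_of_nonneg_right (Finset.sum_nonneg fun u _ => hf u)
      _ = ∑ u ∈ A, f u + ∑ u ∈ 𝒜.sup id, f u := Finset.sum_union_inter
      _ ≤ _ := add_le_add_right ih _

namespace Diversity

variable {X : Type*} [DecidableEq X] (D : Diversity X)

lemma delta_singleton (x : X) : D.delta {x} = 0 :=
  (D.eq_zero_iff _).2 (by simp)

lemma delta_pair_self (x : X) : D.delta {x, x} = 0 := by
  rw [Finset.pair_eq_singleton, delta_singleton]

lemma delta_empty : D.delta ∅ = 0 :=
  (D.eq_zero_iff _).2 (by simp)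

lemma delta_pair_le_add (a b c : X) : D.delta {a, b} ≤ D.delta {a, c} + D.delta {c, b} := by
  simpa only [Finset.insert_eq] using D.triangle {a} {c} {b} (Finset.singleton_nonempty c)

lemma Hyperconvex.nonempty {D : Diversity X} (hH : D.Hyperconvex) : Nonempty X := by
  by_contra hX
  rw [not_nonempty_iff] at hX
  obtain ⟨z, -⟩ := hH (fun _ => 0) rfl fun 𝒜 => by
    simp [Finset.eq_empty_of_isEmpty (𝒜.sup id), delta_empty]
  exact hX.false z

lemma Hyperconvex.exists_delta_pair_le {D : Diversity X} (hH : D.Hyperconvex) {ρ : X → ℝ}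
    (hρ : ∀ A : Finset X, D.delta A ≤ ∑ a ∈ A, ρ a) : ∃ z, ∀ y, D.delta {y, z} ≤ ρ y := by
  have hρ_nonneg : ∀ x, 0 ≤ ρ x := fun x => by simpa [delta_singleton] using hρ {x}
  obtain ⟨z, hz⟩ := hH (fun Y => ∑ y ∈ Y, ρ y) Finset.sum_empty fun 𝒜 =>
    (hρ _).trans (Finset.sum_sup_le_sum_sum hρ_nonneg 𝒜)
  exact ⟨z, fun y => by simpa [Finset.pair_comm] using hz {y}⟩

lemma delta_le_sum_of_delta_pair_le {ρ : X → ℝ} (hρ : ∀ a b, D.delta {a, b} ≤ ρ a + ρ b)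
    {A : Finset X}
    (hA : ((A.card : ℝ) - 1) * D.delta A ≤ (∑ a ∈ A, ∑ b ∈ A, D.delta {a, b}) / 2) :
    D.delta A ≤ ∑ a ∈ A, ρ a := by
  have hρ_nonneg : ∀ x, 0 ≤ ρ x := fun x => by linarith [hρ x x, D.delta_pair_self x]
  rcases le_or_gt A.card 1 with hcard | hcard
  · rw [(D.eq_zero_iff A).2 hcard]
    exact Finset.sum_nonneg fun a _ => hρ_nonneg a
  have row : ∀ a ∈ A, ∑ b ∈ A, D.delta {a, b} ≤ ((A.card : ℝ) - 2) * ρ a + ∑ b ∈ A, ρ b := by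
    intro a ha
    calc ∑ b ∈ A, D.delta {a, b} = ∑ b ∈ A.erase a, D.delta {a, b} :=
          (Finset.sum_erase A (D.delta_pair_self a)).symm
      _ ≤ ∑ b ∈ A.erase a, (ρ a + ρ b) := Finset.sum_le_sum fun b _ => hρ a b
      _ = _ := by
        rw [Finset.sum_add_distrib, Finset.sum_const, Finset.card_erase_of_mem ha, nsmul_eq_mul,
          Finset.sum_erase_eq_sub ha, Nat.cast_sub hcard.le]
        push_cast
        ring
  have total : ∑ a ∈ A, ∑ b ∈ A, D.delta {a, b} ≤ (2 * (A.card : ℝ) - 2) * ∑ a ∈ A, ρ a :=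
    calc _ ≤ ∑ a ∈ A, (((A.card : ℝ) - 2) * ρ a + ∑ b ∈ A, ρ b) := Finset.sum_le_sum row
      _ = _ := by
        rw [Finset.sum_add_distrib, ← Finset.mul_sum, Finset.sum_const, nsmul_eq_mul]
        ring
  have hpos : (0 : ℝ) < A.card - 1 := by
    have : (1 : ℝ) < A.card := by exact_mod_cast hcard
    linarith
  exact le_of_mul_le_mul_left (by linarith) hpos

noncomputable def radiusEnvelope (s : Set (X × ℝ)) (x : X) : ℝ :=
  ⨅ p : s, (D.delta {x, p.1.1} + p.1.2)

variable {D} {s : Set (X × ℝ)}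

lemma radiusEnvelope_le (hr : ∀ p ∈ s, 0 ≤ p.2) {p : X × ℝ} (hp : p ∈ s) :
    D.radiusEnvelope s p.1 ≤ p.2 := by
  unfold radiusEnvelope
  have hbdd : BddBelow (Set.range fun q : s => D.delta {p.1, q.1.1} + q.1.2) :=
    ⟨0, by rintro _ ⟨q, rfl⟩; exact add_nonneg (D.nonneg _) (hr q q.2)⟩
  simpa [delta_singleton] using ciInf_le hbdd ⟨p, hp⟩

lemma delta_pair_le_radiusEnvelope_add (hs : s.Nonempty)
    (hcompat : ∀ p ∈ s, ∀ q ∈ s, D.delta {p.1, q.1} ≤ p.2 + q.2) (a b : X) :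
    D.delta {a, b} ≤ D.radiusEnvelope s a + D.radiusEnvelope s b := by
  have := hs.to_subtype
  have through_centers : ∀ p q : s,
      D.delta {a, b} ≤ (D.delta {a, p.1.1} + p.1.2) + (D.delta {b, q.1.1} + q.1.2) := by
    rintro ⟨p, hp⟩ ⟨q, hq⟩
    have via_p := D.delta_pair_le_add a b p.1
    have via_q := D.delta_pair_le_add p.1 b q.1
    rw [Finset.pair_comm q.1 b] at via_q
    linarith [hcompat p hp q hq]
  rw [← sub_le_iff_le_add]
  refine le_ciInf fun p => ?_
  rw [sub_le_comm]
  exact le_ciInf fun q => by linarith [through_centers p q]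

end Diversity

/-- Let `(X, δ)` be a hyperconvex diversity with induced metric
`d(x,y) = δ {x,y}`. If `(|A| - 1) · δ(A) ≤ ∑_{1 ≤ i < j ≤ n} d(x_i, x_j)` for every
finite subset `A = {x_1, …, x_n}` of `X` (the right-hand side being half of the full
double sum), then the induced metric space `(X, d)` is hyperconvex. -/
theorem inducedHyperconvex_of_hyperconvex_diversity
    {X : Type*} [DecidableEq X] (D : Diversity X)
    (hH : D.Hyperconvex)
    (hcond : ∀ A : Finset X,
      ((A.card : ℝ) - 1) * D.delta A ≤ (∑ a ∈ A, ∑ b ∈ A, D.delta {a, b}) / 2) :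
    D.InducedHyperconvex := by
  intro s hr hcompat
  rcases s.eq_empty_or_nonempty with rfl | hs
  · have := hH.nonempty
    simp
  obtain ⟨z, hz⟩ := hH.exists_delta_pair_le fun A =>
    D.delta_le_sum_of_delta_pair_le (D.delta_pair_le_radiusEnvelope_add hs hcompat) (hcond A)
  exact ⟨z, Set.mem_iInter₂.2 fun p hp => (hz p.1).trans (Diversity.radiusEnvelope_le hr hp)⟩
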